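/- Let ⟨S₁,…,S_k⟩ be a stairwell structure for S ⊆ G × [0,1] with G connected, and fix x ∈ G. Define f: {0,…,k} → {0,1} by f(i) = 1 if i = 0 or i = k or x ∈ σ_{π(βᵢ)}(π(Sᵢ)), and f(i) = 0 otherwise. Then f⁻¹(0) contains no two consecutive integers, and x ∈ π(Sᵢ) if and only if f(i−1) = f(i) = 1. -/

import Mathlib

open Set Topology

/-- A subset of a space is *regular* if it is closed and has finitely many connected
components, each of which is non-degenerate. -/
def IsRegularSet {G : Type*} [TopologicalSpace G] (A : Set G) : Prop :=
  IsClosed A ∧ {C : Set G | ∃ x ∈ A, C = connectedComponentIn A x}.Finite ∧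
    ∀ x ∈ A, (connectedComponentIn A x).Nontrivial

/-- A point of a graph is *ordinary* (neither a branch point nor an endpoint) if it has an
open neighborhood homeomorphic to an open interval. -/
def IsOrdinaryPoint {G : Type*} [TopologicalSpace G] (x : G) : Prop :=
  ∃ U : Set G, IsOpen U ∧ x ∈ U ∧ Nonempty (U ≃ₜ Set.Ioo (0 : ℝ) 1)

/-- A topological space is a *graph* if it is a finite union of arcs which intersect
at most in endpoints. -/
def IsGraphSpace (G : Type*) [TopologicalSpace G] : Prop :=
  ∃ (n : ℕ) (f : Fin n → unitInterval → G),
    (∀ i, Continuous (f i) ∧ Function.Injective (f i)) ∧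
    (⋃ i, Set.range (f i)) = Set.univ ∧
    ∀ i j, i ≠ j →
      Set.range (f i) ∩ Set.range (f j) ⊆ ({f i 0, f i 1} : Set G) ∩ {f j 0, f j 1}

/-- A subset of a space is a *graph* if it is a finite union of arcs which intersect
at most in endpoints. -/
def IsGraphSet {E : Type*} [TopologicalSpace E] (G : Set E) : Prop :=
  ∃ (n : ℕ) (f : Fin n → unitInterval → E),
    (∀ i, Continuous (f i) ∧ Function.Injective (f i)) ∧
    G = ⋃ i, Set.range (f i) ∧
    ∀ i j, i ≠ j →
      Set.range (f i) ∩ Set.range (f j) ⊆ ({f i 0, f i 1} : Set E) ∩ {f j 0, f j 1}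

/-- `φ` restricted to `A` is a homeomorphism onto `B`. -/
def MapsHomeoOnto {F G : Type*} [TopologicalSpace F] [TopologicalSpace G]
    (φ : F → G) (A : Set F) (B : Set G) : Prop :=
  φ '' A = B ∧ Topology.IsEmbedding (A.restrict φ)

/-- A *simple fold* on `G`, with pieces `F1, F2, F3` of `F` and projection `φ : F → G`,
satisfying properties (F1)-(F5). -/
def IsSimpleFold {F G : Type*} [TopologicalSpace F] [TopologicalSpace G]
    (φ : F → G) (F1 F2 F3 : Set F) : Prop :=
  Continuous φ ∧ F1 ∪ F2 ∪ F3 = Set.univ ∧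
  -- (F1)
  ((φ '' F1).Nonempty ∧ (φ '' F2).Nonempty ∧ (φ '' F3).Nonempty) ∧
  (IsRegularSet (φ '' F1) ∧ IsRegularSet (φ '' F2) ∧ IsRegularSet (φ '' F3)) ∧
  -- (F2)
  (φ '' F1) ∪ (φ '' F3) = Set.univ ∧ (φ '' F2) = (φ '' F1) ∩ (φ '' F3) ∧
  -- (F3)
  closure ((φ '' F1) \ (φ '' F2)) ∩ closure ((φ '' F3) \ (φ '' F2)) = ∅ ∧
  -- (F4)
  (MapsHomeoOnto φ F1 (φ '' F1) ∧ MapsHomeoOnto φ F2 (φ '' F2) ∧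
    MapsHomeoOnto φ F3 (φ '' F3)) ∧
  -- (F5)
  frontier (φ '' F1) = φ '' (F1 ∩ F2) ∧ frontier (φ '' F3) = φ '' (F2 ∩ F3) ∧
  F1 ∩ F3 = ∅

/-- `S` separates `A` from `B` within `Y`: the complement `Y \ S` is the union of two
disjoint sets, relatively open in `Y \ S`, containing `A` and `B` respectively. -/
def SeparatesWithin {E : Type*} [TopologicalSpace E] (Y S A B : Set E) : Prop :=
  ∃ U V : Set E,
    U ∪ V = Y \ S ∧ U ∩ V = ∅ ∧ A ⊆ U ∧ B ⊆ V ∧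
    (∃ U', IsOpen U' ∧ U = (Y \ S) ∩ U') ∧ (∃ V', IsOpen V' ∧ V = (Y \ S) ∩ V')

/-- `A` has *consistent complement relative to* `B`: for each component `C` of the
complement of `A`, either `∂C ⊆ B` or `∂C ∩ B = ∅`. -/
def ConsistentComplement {G : Type*} [TopologicalSpace G] (A B : Set G) : Prop :=
  ∀ x ∉ A, frontier (connectedComponentIn Aᶜ x) ⊆ B ∨
    frontier (connectedComponentIn Aᶜ x) ∩ B = ∅

/-- The *`A` side of `B`*, `σ_B(A)`: the closure of the union of all components of
`G \ B` meeting `A`. -/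
def sideOf {G : Type*} [TopologicalSpace G] (B A : Set G) : Set G :=
  closure (⋃ x ∈ {x : G | x ∉ B ∧ (connectedComponentIn Bᶜ x ∩ A).Nonempty},
    connectedComponentIn Bᶜ x)

/-- A subset of `G × [0,1]` is *straight* if it is closed, the projection is injective on
it, and its projection is regular. -/
def IsStraight {G : Type*} [TopologicalSpace G] (S : Set (G × unitInterval)) : Prop :=
  IsClosed S ∧ Set.InjOn Prod.fst S ∧ IsRegularSet (Prod.fst '' S)

/-- The *end set* of a straight set. -/
def endSet {G : Type*} [TopologicalSpace G] (S : Set (G × unitInterval)) :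
    Set (G × unitInterval) :=
  S ∩ Prod.fst ⁻¹' (frontier (Prod.fst '' S))

/-- A *stairwell structure* of height `k` for `S ⊆ G × [0,1]`, given by the pieces
`Sp 1, …, Sp k` with end set decompositions `E(Sp i) = α i ∪ β i`. -/
def IsStairwell {G : Type*} [TopologicalSpace G]
    (Sp α β : ℕ → Set (G × unitInterval)) (k : ℕ) (S : Set (G × unitInterval)) : Prop :=
  1 ≤ k ∧
  -- (S1)
  (∀ i ∈ Set.Icc 1 k, (Sp i).Nonempty ∧ IsStraight (Sp i)) ∧
  S = ⋃ i ∈ Set.Icc 1 k, Sp i ∧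
  -- (S2)
  (∀ i ∈ Set.Icc 1 k, endSet (Sp i) = α i ∪ β i ∧ α i ∩ β i = ∅ ∧
    (α i).Finite ∧ (β i).Finite) ∧
  α 1 = ∅ ∧ β k = ∅ ∧ (∀ i, 1 ≤ i → i < k → β i = α (i + 1)) ∧
  -- (S3)
  (∀ i, 1 ≤ i → i < k → ∃ V : Set G, IsOpen V ∧ Prod.fst '' β i ⊆ V ∧
    Prod.fst '' Sp i ∩ V = Prod.fst '' Sp (i + 1) ∩ V) ∧
  -- (S4)
  (∀ i ∈ Set.Icc 1 k, ConsistentComplement (Prod.fst '' Sp i) (Prod.fst '' α i) ∧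
    ConsistentComplement (Prod.fst '' Sp i) (Prod.fst '' β i)) ∧
  -- (S5)
  (∀ i ∈ Set.Icc 2 k, ∀ p ∈ α i, IsOrdinaryPoint p.1) ∧
  (∀ i j, 2 ≤ i → i < j → j ≤ k → Prod.fst '' α i ∩ Prod.fst '' α j = ∅)

/-- A *broken stairwell structure* of height `k` with a pit at level `i0`. -/
def IsBrokenStairwell {G : Type*} [TopologicalSpace G]
    (Sp α β : ℕ → Set (G × unitInterval)) (γ P1 P2 : Set (G × unitInterval))
    (k i0 : ℕ) (S : Set (G × unitInterval)) : Prop :=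
  1 ≤ k ∧ 1 ≤ i0 ∧ i0 ≤ k ∧
  -- (S1')
  (∀ i ∈ Set.Icc 1 k, (Sp i).Nonempty ∧ IsStraight (Sp i)) ∧
  P1.Nonempty ∧ IsStraight P1 ∧ P2.Nonempty ∧ IsStraight P2 ∧
  S = (⋃ i ∈ Set.Icc 1 k, Sp i) ∪ P1 ∪ P2 ∧
  -- (S2')
  (∀ i ∈ Set.Icc 1 k, i ≠ i0 → endSet (Sp i) = α i ∪ β i) ∧
  endSet (Sp i0) = α i0 ∪ β i0 ∪ γ ∧
  (∀ i ∈ Set.Icc 1 k, α i ∩ β i = ∅ ∧ (α i).Finite ∧ (β i).Finite) ∧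
  γ.Finite ∧ α i0 ∩ γ = ∅ ∧ β i0 ∩ γ = ∅ ∧
  α 1 = ∅ ∧ β k = ∅ ∧ (∀ i, 1 ≤ i → i < k → β i = α (i + 1)) ∧
  endSet P2 = endSet P1 ∪ γ ∧ endSet P1 ∩ γ = ∅ ∧
  -- (S3')
  (∀ i, 1 ≤ i → i < k → ∃ V : Set G, IsOpen V ∧ Prod.fst '' β i ⊆ V ∧
    Prod.fst '' Sp i ∩ V = Prod.fst '' Sp (i + 1) ∩ V) ∧
  (∃ V : Set G, IsOpen V ∧ Prod.fst '' endSet P1 ⊆ V ∧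
    Prod.fst '' P1 ∩ V = Prod.fst '' P2 ∩ V) ∧
  (∃ W : Set G, IsOpen W ∧ Prod.fst '' γ ⊆ W ∧
    Prod.fst '' P2 ∩ W = Prod.fst '' Sp i0 ∩ W) ∧
  -- (S4')
  (∀ i ∈ Set.Icc 1 k, ConsistentComplement (Prod.fst '' Sp i) (Prod.fst '' α i) ∧
    ConsistentComplement (Prod.fst '' Sp i) (Prod.fst '' β i)) ∧
  ConsistentComplement (Prod.fst '' Sp i0) (Prod.fst '' γ) ∧
  ConsistentComplement (Prod.fst '' P2) (Prod.fst '' endSet P1) ∧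
  ConsistentComplement (Prod.fst '' P2) (Prod.fst '' γ) ∧
  -- (S5')
  (∀ i ∈ Set.Icc 2 k, ∀ p ∈ α i, IsOrdinaryPoint p.1) ∧
  (∀ p ∈ endSet P1, IsOrdinaryPoint p.1) ∧ (∀ p ∈ γ, IsOrdinaryPoint p.1) ∧
  (∀ i j, 2 ≤ i → i < j → j ≤ k → Prod.fst '' α i ∩ Prod.fst '' α j = ∅) ∧
  (∀ i ∈ Set.Icc 2 k, Prod.fst '' α i ∩ Prod.fst '' endSet P1 = ∅ ∧
    Prod.fst '' α i ∩ Prod.fst '' γ = ∅) ∧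
  Prod.fst '' endSet P1 ∩ Prod.fst '' γ = ∅ ∧
  -- (S6')
  Prod.fst '' α i0 ∩ Prod.fst '' (P1 ∪ P2) = ∅

/-- A compactum is *hereditarily indecomposable* if every non-degenerate subcontinuum is
indecomposable, i.e. is not the union of two proper subcontinua. -/
def HereditarilyIndecomposable (X : Type*) [TopologicalSpace X] : Prop :=
  ∀ K : Set X, IsCompact K → IsConnected K → K.Nontrivial →
    ¬ ∃ A B : Set X, IsCompact A ∧ IsConnected A ∧ IsCompact B ∧ IsConnected B ∧
      A ∪ B = K ∧ A ≠ K ∧ B ≠ K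

/-- A continuum is *arc-like* if for every `ε > 0` it admits an `ε`-map onto `[0,1]`. -/
def ArcLike (X : Type*) [MetricSpace X] : Prop :=
  ∀ ε > (0 : ℝ), ∃ f : X → unitInterval, Continuous f ∧ Function.Surjective f ∧
    ∀ y, Metric.diam (f ⁻¹' {y}) < ε

/-- A continuum has *span zero* if every subcontinuum `Z ⊆ X × X` with
`π₁(Z) ⊆ π₂(Z)` meets the diagonal. -/
def SpanZero (X : Type*) [TopologicalSpace X] : Prop :=
  ∀ Z : Set (X × X), IsCompact Z → IsConnected Z →
    Prod.fst '' Z ⊆ Prod.snd '' Z → ∃ x, (x, x) ∈ Z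

/-!
Each piece `A = π(Sᵢ)` is a regular set whose frontier is the disjoint union of the finite
sets `a = π(αᵢ)` and `b = π(βᵢ)`. A component `C` of `G \ A` has non-empty frontier in `a ∪ b`,
and consistency of the complement puts `∂C` entirely inside `a` or entirely inside `b`; in the
first case `C` lies in `σ_b(A)` but not in `σ_a(A)`, in the second the other way round. Hence
`σ_a(A) ∪ σ_b(A) = G` and `σ_a(A) ∩ σ_b(A) = A`.

Consecutive pieces agree near `b = π(βᵢ) = π(αᵢ₊₁)`, which forces
`σ_b(π(Sᵢ)) = σ_b(π(Sᵢ₊₁))`. If a component `D` of `G \ b` met `A = π(Sᵢ)` but not `π(Sᵢ₊₁)`,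
it would approach a point `y ∈ b` from `G \ A`, so some component of `G \ A` meeting `D` would
have its frontier in `b`. As all frontier points are ordinary, each approached from at most two
sides, the union of such components is closed in `D`, hence all of `D`, contradicting
`D ∩ A ≠ ∅`.

Through this equality `f(i - 1) = 1` says `x ∈ σ_{αᵢ}(π(Sᵢ))`, and `f(i) = 1` says
`x ∈ σ_{βᵢ}(π(Sᵢ))`, so the two claims are the two facts about the single piece `π(Sᵢ)`.
-/

section Topology

variable {G : Type*} [TopologicalSpace G]

theorem IsGraphSpace.locallyPathConnectedSpace [T2Space G] (hG : IsGraphSpace G) :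
    LocallyPathConnectedSpace G := by
  obtain ⟨n, f, hf, hcov, -⟩ := hG
  have : LocallyPathConnectedSpace unitInterval :=
    Convex.locallyPathConnectedSpace ℝ (convex_Icc 0 1)
  have : LocallyPathConnectedSpace (Σ _ : Fin n, unitInterval) :=
    Sigma.locallyPathConnectedSpace
  let F : (Σ _ : Fin n, unitInterval) → G := fun p => f p.1 p.2
  have hF : Continuous F := continuous_sigma fun i => (hf i).1
  have hFsurj : Function.Surjective F := fun y => by
    obtain ⟨i, t, ht⟩ := mem_iUnion.mp (show y ∈ ⋃ i, range (f i) by rw [hcov]; trivial)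
    exact ⟨⟨i, t⟩, ht⟩
  exact (hF.isClosedMap.isQuotientMap hF hFsurj).locallyPathConnectedSpace

theorem IsPreconnected.subset_of_disjoint_frontier {S A : Set G} (hS : IsPreconnected S)
    (hSA : Disjoint S (frontier A)) (hmeet : (S ∩ A).Nonempty) : S ⊆ A := by
  have hint : ∀ u ∈ S, u ∈ closure A → u ∈ interior A := fun u hu hcl => by
    by_contra hi
    exact disjoint_left.mp hSA hu ⟨hcl, hi⟩
  obtain ⟨q, hqS, hqA⟩ := hmeet
  refine (hS.subset_of_closure_inter_subset isOpen_interior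
    ⟨q, hqS, hint q hqS (subset_closure hqA)⟩ ?_).trans interior_subset
  exact fun u ⟨hu, huS⟩ => hint u huS (closure_mono interior_subset hu)

theorem IsPreconnected.subset_closure_sdiff_of_finite [T1Space G] {C F : Set G}
    (hC : IsPreconnected C) (hnt : C.Nontrivial) (hF : F.Finite) : C ⊆ closure (C \ F) := by
  intro x hx
  rw [mem_closure_iff]
  intro o ho hxo
  obtain ⟨y, hyC, hyx⟩ := hnt.exists_ne x
  have hxo' : x ∈ o \ (F \ {x}) := ⟨hxo, fun h => h.2 rfl⟩
  obtain ⟨z, hzC, ⟨hzo, hzF⟩, hzx⟩ := hC (o \ (F \ {x})) {x}ᶜ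
    (ho.sdiff (hF.sdiff (t := {x})).isClosed) isOpen_compl_singleton
    (fun z _ => (em (z = x)).imp (fun (h : z = x) => h ▸ hxo') id) ⟨x, hx, hxo'⟩ ⟨y, hyC, hyx⟩
  exact ⟨z, hzo, hzC, fun hzF' => hzF ⟨hzF', hzx⟩⟩

end Topology

section ComplementComponents

variable {G : Type*} [TopologicalSpace G]

theorem closure_connectedComponentIn_inter_subset (s : Set G) (x : G) :
    closure (connectedComponentIn s x) ∩ s ⊆ connectedComponentIn s x := by
  by_cases hx : x ∈ s
  · have hC : connectedComponentIn s x ⊆ closure (connectedComponentIn s x) ∩ s :=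
      subset_inter subset_closure (connectedComponentIn_subset _ _)
    exact (isPreconnected_connectedComponentIn.subset_closure hC inter_subset_left)
      |>.subset_connectedComponentIn (hC (mem_connectedComponentIn hx)) inter_subset_right
  · simp [connectedComponentIn_eq_empty hx]

theorem frontier_connectedComponentIn_compl_subset [LocallyConnectedSpace G] {A : Set G}
    (hA : IsClosed A) (x : G) : frontier (connectedComponentIn Aᶜ x) ⊆ frontier A := by
  rw [hA.isOpen_compl.connectedComponentIn.frontier_eq, frontier_eq_closure_inter_closure,
    hA.closure_eq]
  refine fun y ⟨hy, hyC⟩ => ⟨?_, closure_mono (connectedComponentIn_subset _ _) hy⟩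
  by_contra hyA
  exact hyC (closure_connectedComponentIn_inter_subset _ _ ⟨hy, hyA⟩)

theorem frontier_connectedComponentIn_compl_nonempty [PreconnectedSpace G] {A : Set G}
    (hA : A.Nonempty) {x : G} (hx : x ∉ A) : (frontier (connectedComponentIn Aᶜ x)).Nonempty := by
  refine nonempty_frontier_iff.mpr ⟨⟨x, mem_connectedComponentIn hx⟩, fun h => ?_⟩
  obtain ⟨a, ha⟩ := hA
  exact (connectedComponentIn_subset _ _ (h ▸ mem_univ a) : a ∉ A) ha

end ComplementComponents

section OrdinaryPoint

variable {G : Type*} [TopologicalSpace G]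

theorem IsOrdinaryPoint.exists_chart {z : G} (hz : IsOrdinaryPoint z) :
    ∃ Φ : OpenPartialHomeomorph G ℝ, z ∈ Φ.source := by
  obtain ⟨U, hU, hzU, ⟨h⟩⟩ := hz
  let U' : TopologicalSpace.Opens G := ⟨U, hU⟩
  let I : TopologicalSpace.Opens ℝ := ⟨Ioo 0 1, isOpen_Ioo⟩
  refine ⟨(U'.openPartialHomeomorphSubtypeCoe ⟨⟨z, hzU⟩⟩).symm.trans
    (h.toOpenPartialHomeomorph.trans (I.openPartialHomeomorphSubtypeCoe ⟨h ⟨z, hzU⟩⟩)), ?_⟩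
  simpa [U'] using hzU

theorem OpenPartialHomeomorph.exists_sides (Φ : OpenPartialHomeomorph G ℝ) {z : G}
    (hz : z ∈ Φ.source) {W : Set G} (hW : W ∈ 𝓝 z) :
    ∃ L R : Set G, IsPreconnected L ∧ IsPreconnected R ∧ z ∈ closure L ∧ z ∈ closure R ∧
      L ∪ R ⊆ W \ {z} ∧ insert z (L ∪ R) ∈ 𝓝 z := by
  set t := Φ z
  have hzt : Φ.symm t = z := Φ.left_inv hz
  have ht : t ∈ Φ.target := Φ.map_source hz
  have hN : Φ.target ∩ Φ.symm ⁻¹' W ∈ 𝓝 t :=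
    Filter.inter_mem (Φ.open_target.mem_nhds ht) (Φ.continuousAt_symm ht (hzt ▸ hW))
  obtain ⟨ε, hε, hball⟩ := Metric.mem_nhds_iff.mp hN
  rw [Real.ball_eq_Ioo] at hball
  have hsub : ∀ J ⊆ Ioo (t - ε) (t + ε), t ∉ J → Φ.symm '' J ⊆ W \ {z} := by
    rintro J hJ htJ _ ⟨s, hs, rfl⟩
    refine ⟨(hball (hJ hs)).2, fun hsz => htJ ?_⟩
    rw [← hzt] at hsz
    exact Φ.symm.injOn (hball (hJ hs)).1 ht hsz ▸ hs
  have hcont := Φ.continuousOn_symm.mono (hball.trans inter_subset_left)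
  have hL : Ioo (t - ε) t ⊆ Ioo (t - ε) (t + ε) := Ioo_subset_Ioo_right (by linarith)
  have hR : Ioo t (t + ε) ⊆ Ioo (t - ε) (t + ε) := Ioo_subset_Ioo_left (by linarith)
  refine ⟨Φ.symm '' Ioo (t - ε) t, Φ.symm '' Ioo t (t + ε),
    isPreconnected_Ioo.image _ (hcont.mono hL), isPreconnected_Ioo.image _ (hcont.mono hR),
    hzt ▸ mem_closure_image (Φ.continuousAt_symm ht) ?_,
    hzt ▸ mem_closure_image (Φ.continuousAt_symm ht) ?_,
    union_subset (hsub _ hL fun h => lt_irrefl t h.2) (hsub _ hR fun h => lt_irrefl t h.1), ?_⟩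
  · rw [closure_Ioo (sub_lt_self t hε).ne]; exact right_mem_Icc.mpr (by linarith)
  · rw [closure_Ioo (lt_add_of_pos_right t hε).ne]; exact left_mem_Icc.mpr (by linarith)
  · have hN' : Φ.symm '' Ioo (t - ε) (t + ε) ∈ 𝓝 z := hzt ▸ Φ.symm.image_mem_nhds ht
      (Ioo_mem_nhds (sub_lt_self t hε) (lt_add_of_pos_right t hε))
    refine Filter.mem_of_superset hN' ?_
    rintro _ ⟨s, hs, rfl⟩
    rcases lt_trichotomy s t with hst | rfl | hst
    · exact Or.inr (Or.inl ⟨s, ⟨hs.1, hst⟩, rfl⟩)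
    · exact Or.inl hzt
    · exact Or.inr (Or.inr ⟨s, ⟨hst, hs.2⟩, rfl⟩)

theorem IsOrdinaryPoint.exists_isPreconnected_inter_nonempty {z : G} (hz : IsOrdinaryPoint z)
    {W X : Set G} (hW : W ∈ 𝓝 z) (hzX : z ∈ closure X) (hzX' : z ∉ X) :
    ∃ S, IsPreconnected S ∧ S ⊆ W \ {z} ∧ z ∈ closure S ∧ (S ∩ X).Nonempty := by
  obtain ⟨Φ, hΦ⟩ := hz.exists_chart
  obtain ⟨L, R, hL, hR, hzL, hzR, hLR, hN⟩ := Φ.exists_sides hΦ hW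
  obtain ⟨q, hq, hqX⟩ := mem_closure_iff_nhds.mp hzX _ hN
  rcases hq with rfl | hqL | hqR
  · exact absurd hqX hzX'
  · exact ⟨L, hL, subset_union_left.trans hLR, hzL, q, hqL, hqX⟩
  · exact ⟨R, hR, subset_union_right.trans hLR, hzR, q, hqR, hqX⟩

theorem IsOrdinaryPoint.exists_mem_frontier_connectedComponentIn [T1Space G] {A X : Set G}
    {z : G} (hz : IsOrdinaryPoint z) (hzA : z ∈ A) (hfin : (frontier A).Finite)
    (hXA : X ⊆ Aᶜ) (hzX : z ∈ closure X) :
    ∃ q ∈ X, z ∈ frontier (connectedComponentIn Aᶜ q) := by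
  have hW : (frontier A \ {z})ᶜ ∈ 𝓝 z :=
    (hfin.sdiff (t := {z})).isClosed.isOpen_compl.mem_nhds fun h => h.2 rfl
  obtain ⟨S, hS, hSW, hzS, q, hqS, hqX⟩ :=
    hz.exists_isPreconnected_inter_nonempty hW hzX fun h => hXA h hzA
  have hSfr : Disjoint S (frontier Aᶜ) := by
    rw [frontier_compl]
    exact disjoint_left.mpr fun u hu hfr => (hSW hu).1 ⟨hfr, (hSW hu).2⟩
  have hSA : S ⊆ Aᶜ := hS.subset_of_disjoint_frontier hSfr ⟨q, hqS, hXA hqX⟩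
  exact ⟨q, hqX, closure_mono (hS.subset_connectedComponentIn hqS hSA) hzS,
    fun hi => connectedComponentIn_subset _ _ (interior_subset hi) hzA⟩

end OrdinaryPoint

section Sides

variable {G : Type*} [TopologicalSpace G]

theorem connectedComponentIn_subset_sideOf {B A : Set G} {x : G} (hx : x ∉ B)
    (hmeet : (connectedComponentIn Bᶜ x ∩ A).Nonempty) :
    connectedComponentIn Bᶜ x ⊆ sideOf B A :=
  (subset_biUnion_of_mem (u := fun x => connectedComponentIn Bᶜ x)
    (show x ∈ {x | x ∉ B ∧ (connectedComponentIn Bᶜ x ∩ A).Nonempty} from ⟨hx, hmeet⟩)).trans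
    subset_closure

theorem sideOf_subset_sideOf {B A A' : Set G}
    (h : ∀ x ∉ B, (connectedComponentIn Bᶜ x ∩ A).Nonempty →
      (connectedComponentIn Bᶜ x ∩ A').Nonempty) :
    sideOf B A ⊆ sideOf B A' :=
  closure_mono (biUnion_mono (fun x hx => ⟨hx.1, h x hx.1 hx.2⟩) fun _ _ => Subset.rfl)

theorem sideOf_empty [PreconnectedSpace G] {A : Set G} (hA : A.Nonempty) :
    sideOf ∅ A = univ := by
  obtain ⟨a, ha⟩ := hA
  have hcc : connectedComponentIn (∅ : Set G)ᶜ a = univ := by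
    rw [compl_empty, connectedComponentIn_univ, PreconnectedSpace.connectedComponent_eq_univ]
  refine eq_univ_of_univ_subset (hcc ▸ connectedComponentIn_subset_sideOf (notMem_empty a) ?_)
  exact hcc ▸ ⟨a, mem_univ a, ha⟩

theorem subset_sideOf [T1Space G] {B A : Set G} (hB : B.Finite)
    (hA : ∀ x ∈ A, (connectedComponentIn A x).Nontrivial) : A ⊆ sideOf B A := by
  intro x hx
  have hxcl := isPreconnected_connectedComponentIn.subset_closure_sdiff_of_finite (hA x hx) hB
    (mem_connectedComponentIn hx)
  refine isClosed_closure.closure_subset_iff.mpr ?_ hxcl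
  rintro y ⟨hyC, hyB⟩
  exact connectedComponentIn_subset_sideOf hyB
    ⟨y, mem_connectedComponentIn hyB, connectedComponentIn_subset _ _ hyC⟩
    (mem_connectedComponentIn hyB)

theorem mem_sideOf_of_disjoint_frontier [PreconnectedSpace G] [LocallyConnectedSpace G]
    {A s : Set G} (hA : IsClosed A) (hAne : A.Nonempty) (hsA : s ⊆ A) {x : G} (hx : x ∉ A)
    (hdisj : Disjoint (frontier (connectedComponentIn Aᶜ x)) s) : x ∈ sideOf s A := by
  set C := connectedComponentIn Aᶜ x
  obtain ⟨y, hy⟩ := frontier_connectedComponentIn_compl_nonempty hAne hx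
  have hxs : x ∉ s := fun h => hx (hsA h)
  have hCs : closure C ⊆ sᶜ := by
    rw [closure_eq_self_union_frontier]
    exact union_subset (fun u hu hus => connectedComponentIn_subset _ _ hu (hsA hus))
      hdisj.subset_compl_right
  have hCD : closure C ⊆ connectedComponentIn sᶜ x :=
    isPreconnected_connectedComponentIn.closure.subset_connectedComponentIn
      (subset_closure (mem_connectedComponentIn hx)) hCs
  have hyA : y ∈ A := hA.frontier_subset (frontier_connectedComponentIn_compl_subset hA x hy)
  exact connectedComponentIn_subset_sideOf hxs ⟨y, hCD (frontier_subset_closure hy), hyA⟩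
    (mem_connectedComponentIn hxs)

/-- `C` is closed in `sᶜ`, so every component of `sᶜ` meeting `C` lies in `C`, away from `A`. -/
theorem notMem_sideOf_of_frontier_subset [LocallyConnectedSpace G] {A s : Set G}
    (hA : IsClosed A) {x : G} (hx : x ∉ A) (hsub : frontier (connectedComponentIn Aᶜ x) ⊆ s) :
    x ∉ sideOf s A := by
  set C := connectedComponentIn Aᶜ x
  have hC : IsOpen C := hA.isOpen_compl.connectedComponentIn
  have hdisj : Disjoint C (⋃ z ∈ {z | z ∉ s ∧ (connectedComponentIn sᶜ z ∩ A).Nonempty},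
      connectedComponentIn sᶜ z) := by
    refine disjoint_left.mpr fun q hqC hqU => ?_
    obtain ⟨z, ⟨-, w, hwD, hwA⟩, hqD⟩ := mem_iUnion₂.mp hqU
    have hDC : connectedComponentIn sᶜ z ⊆ C := by
      refine isPreconnected_connectedComponentIn.subset_of_closure_inter_subset hC ⟨q, hqD, hqC⟩ ?_
      rintro u ⟨hu, huD⟩
      rw [closure_eq_self_union_frontier] at hu
      exact hu.resolve_right fun h => connectedComponentIn_subset _ _ huD (hsub h)
    exact connectedComponentIn_subset _ _ (hDC hwD) hwA
  exact disjoint_left.mp (hdisj.closure_right hC) (mem_connectedComponentIn hx)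

theorem mem_sideOf_or_mem_sideOf [PreconnectedSpace G] [LocallyConnectedSpace G] [T1Space G]
    {A a b : Set G} (hA : IsClosed A) (hAne : A.Nonempty)
    (hreg : ∀ x ∈ A, (connectedComponentIn A x).Nontrivial) (ha : a.Finite) (haA : a ⊆ A)
    (hbA : b ⊆ A) (hab : Disjoint a b) (hcc : ConsistentComplement A a) (x : G) :
    x ∈ sideOf a A ∨ x ∈ sideOf b A := by
  by_cases hx : x ∈ A
  · exact Or.inl (subset_sideOf ha hreg hx)
  rcases hcc x hx with h | h
  · exact Or.inr (mem_sideOf_of_disjoint_frontier hA hAne hbA hx (hab.mono_left h))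
  · exact Or.inl (mem_sideOf_of_disjoint_frontier hA hAne haA hx
      (disjoint_iff_inter_eq_empty.mpr h))

theorem sideOf_inter_sideOf_subset [PreconnectedSpace G] [LocallyConnectedSpace G]
    {A a b : Set G} (hA : IsClosed A) (hAne : A.Nonempty) (hfr : frontier A ⊆ a ∪ b)
    (hcca : ConsistentComplement A a) (hccb : ConsistentComplement A b) :
    sideOf a A ∩ sideOf b A ⊆ A := by
  rintro x ⟨hxa, hxb⟩
  by_contra hx
  rcases hcca x hx with ha | ha
  · exact notMem_sideOf_of_frontier_subset hA hx ha hxa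
  rcases hccb x hx with hb | hb
  · exact notMem_sideOf_of_frontier_subset hA hx hb hxb
  obtain ⟨y, hy⟩ := frontier_connectedComponentIn_compl_nonempty hAne hx
  rcases hfr (frontier_connectedComponentIn_compl_subset hA x hy) with hya | hyb
  · exact ha.subset ⟨hy, hya⟩
  · exact hb.subset ⟨hy, hyb⟩

end Sides

section Transfer

variable {G : Type*} [TopologicalSpace G] [LocallyConnectedSpace G] [T1Space G]

/-- The union `T` of the components of `Aᶜ` with frontier in `b` is closed in `D`: a limit point
of `T` in `A ∩ D` would be an ordinary point of `∂A \ b` on the frontier of one of them. -/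
theorem frontier_connectedComponentIn_compl_not_subset {A b : Set G} (hA : IsClosed A)
    (hfin : (frontier A).Finite) (hord : ∀ z ∈ frontier A, z ∉ b → IsOrdinaryPoint z)
    {x p : G} (hmeet : (connectedComponentIn bᶜ x ∩ A).Nonempty)
    (hpD : p ∈ connectedComponentIn bᶜ x) (hpA : p ∉ A) :
    ¬ frontier (connectedComponentIn Aᶜ p) ⊆ b := by
  set D := connectedComponentIn bᶜ x
  intro hpb
  set T := ⋃ z ∈ {z | z ∈ D ∧ z ∉ A ∧ frontier (connectedComponentIn Aᶜ z) ⊆ b},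
    connectedComponentIn Aᶜ z
  have hTA : T ⊆ Aᶜ := iUnion₂_subset fun z _ => connectedComponentIn_subset _ _
  have hclosed : closure T ∩ D ⊆ T := by
    rintro z ⟨hzT, hzD⟩
    have hzb : z ∉ b := connectedComponentIn_subset _ _ hzD
    by_cases hzA : z ∈ A
    · have hzfr : z ∈ frontier A := ⟨subset_closure hzA, fun hi => by
        obtain ⟨u, hui, huT⟩ := mem_closure_iff.mp hzT _ isOpen_interior hi
        exact hTA huT (interior_subset hui)⟩
      obtain ⟨q, hqT, hzq⟩ :=
        (hord z hzfr hzb).exists_mem_frontier_connectedComponentIn hzA hfin hTA hzT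
      obtain ⟨w, ⟨-, -, hwb⟩, hqw⟩ := mem_iUnion₂.mp hqT
      rw [← connectedComponentIn_eq hqw] at hzq
      exact absurd (hwb hzq) hzb
    · obtain ⟨q, hqz, hqT⟩ := mem_closure_iff.mp hzT _ hA.isOpen_compl.connectedComponentIn
        (mem_connectedComponentIn hzA)
      obtain ⟨w, ⟨-, -, hwb⟩, hqw⟩ := mem_iUnion₂.mp hqT
      refine mem_iUnion₂.mpr ⟨z, ⟨hzD, hzA, ?_⟩, mem_connectedComponentIn hzA⟩
      rwa [connectedComponentIn_eq hqz, ← connectedComponentIn_eq hqw]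
  have hDT : D ⊆ T := isPreconnected_connectedComponentIn.subset_of_closure_inter_subset
    (isOpen_biUnion fun z _ => hA.isOpen_compl.connectedComponentIn)
    ⟨p, hpD, mem_iUnion₂.mpr ⟨p, ⟨hpD, hpA, hpb⟩, mem_connectedComponentIn hpA⟩⟩ hclosed
  obtain ⟨w, hwD, hwA⟩ := hmeet
  exact hTA (hDT hwD) hwA

theorem sideOf_subset_sideOf_of_inter_eq [PreconnectedSpace G] {A A' b V : Set G}
    (hA : IsClosed A) (hfin : (frontier A).Finite) (hord : ∀ z ∈ frontier A, IsOrdinaryPoint z)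
    (hb : b ⊆ frontier A) (hcc : ConsistentComplement A b) (hV : IsOpen V) (hbV : b ⊆ V)
    (hAV : A ∩ V = A' ∩ V) (hA' : A'.Nonempty) : sideOf b A ⊆ sideOf b A' := by
  refine sideOf_subset_sideOf fun x hx hmeet => ?_
  rcases b.eq_empty_or_nonempty with rfl | hbne
  · rwa [compl_empty, connectedComponentIn_univ, PreconnectedSpace.connectedComponent_eq_univ,
      univ_inter]
  by_contra hD'
  set D := connectedComponentIn bᶜ x
  have hbc : IsClosed b := (hfin.subset hb).isClosed
  obtain ⟨y, hyD⟩ := frontier_connectedComponentIn_compl_nonempty hbne hx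
  have hyb : y ∈ b := hbc.frontier_subset (frontier_connectedComponentIn_compl_subset hbc x hyD)
  have hyA : y ∈ A := hA.frontier_subset (hb hyb)
  have hycl : y ∈ closure (D ∩ A) ∪ closure (D \ A) := by
    rw [← closure_union, inter_union_sdiff]
    exact frontier_subset_closure hyD
  rcases hycl with hy | hy
  · obtain ⟨u, huV, huD, huA⟩ := mem_closure_iff.mp hy V hV (hbV hyb)
    have huA' : u ∈ A' ∩ V := hAV ▸ ⟨huA, huV⟩
    exact hD' ⟨u, huD, huA'.1⟩
  · obtain ⟨q, ⟨hqD, hqA⟩, hyq⟩ := (hord y (hb hyb)).exists_mem_frontier_connectedComponentIn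
      hyA hfin (fun u hu => hu.2) hy
    have hqb : frontier (connectedComponentIn Aᶜ q) ⊆ b :=
      (hcc q hqA).resolve_right fun h => h.subset ⟨hyq, hyb⟩
    exact frontier_connectedComponentIn_compl_not_subset hA hfin (fun z hz _ => hord z hz)
      hmeet hqD hqA hqb

end Transfer

namespace IsStairwell

variable {G : Type*} [TopologicalSpace G] {Sp α β : ℕ → Set (G × unitInterval)} {k : ℕ}
  {S : Set (G × unitInterval)} {i : ℕ}

theorem alpha_one (h : IsStairwell Sp α β k S) : α 1 = ∅ := h.2.2.2.2.1

theorem beta_last (h : IsStairwell Sp α β k S) : β k = ∅ := h.2.2.2.2.2.1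

theorem beta_eq_alpha_succ (h : IsStairwell Sp α β k S) (hi1 : 1 ≤ i) (hik : i < k) :
    β i = α (i + 1) :=
  h.2.2.2.2.2.2.1 i hi1 hik

theorem endSet_eq (h : IsStairwell Sp α β k S) (hi : i ∈ Icc 1 k) :
    endSet (Sp i) = α i ∪ β i :=
  (h.2.2.2.1 i hi).1

theorem finite_image_alpha (h : IsStairwell Sp α β k S) (hi : i ∈ Icc 1 k) :
    (Prod.fst '' α i).Finite :=
  (h.2.2.2.1 i hi).2.2.1.image _

theorem finite_image_beta (h : IsStairwell Sp α β k S) (hi : i ∈ Icc 1 k) :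
    (Prod.fst '' β i).Finite :=
  (h.2.2.2.1 i hi).2.2.2.image _

theorem consistentComplement_alpha (h : IsStairwell Sp α β k S) (hi : i ∈ Icc 1 k) :
    ConsistentComplement (Prod.fst '' Sp i) (Prod.fst '' α i) :=
  (h.2.2.2.2.2.2.2.2.1 i hi).1

theorem consistentComplement_beta (h : IsStairwell Sp α β k S) (hi : i ∈ Icc 1 k) :
    ConsistentComplement (Prod.fst '' Sp i) (Prod.fst '' β i) :=
  (h.2.2.2.2.2.2.2.2.1 i hi).2

theorem nonempty_image (h : IsStairwell Sp α β k S) (hi : i ∈ Icc 1 k) :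
    (Prod.fst '' Sp i).Nonempty :=
  (h.2.1 i hi).1.image _

theorem isRegularSet_image (h : IsStairwell Sp α β k S) (hi : i ∈ Icc 1 k) :
    IsRegularSet (Prod.fst '' Sp i) :=
  (h.2.1 i hi).2.2.2

theorem alpha_subset (h : IsStairwell Sp α β k S) (hi : i ∈ Icc 1 k) : α i ⊆ Sp i :=
  fun _ hp => ((h.endSet_eq hi ▸ Or.inl hp : _ ∈ endSet (Sp i))).1

theorem beta_subset (h : IsStairwell Sp α β k S) (hi : i ∈ Icc 1 k) : β i ⊆ Sp i :=
  fun _ hp => ((h.endSet_eq hi ▸ Or.inr hp : _ ∈ endSet (Sp i))).1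

theorem frontier_image (h : IsStairwell Sp α β k S) (hi : i ∈ Icc 1 k) :
    frontier (Prod.fst '' Sp i) = Prod.fst '' α i ∪ Prod.fst '' β i := by
  have hfr : frontier (Prod.fst '' Sp i) ⊆ Prod.fst '' Sp i :=
    (h.isRegularSet_image hi).1.frontier_subset
  rw [← image_union, ← h.endSet_eq hi, endSet, image_inter_preimage,
    inter_eq_self_of_subset_right hfr]

theorem finite_frontier_image (h : IsStairwell Sp α β k S) (hi : i ∈ Icc 1 k) :
    (frontier (Prod.fst '' Sp i)).Finite :=
  h.frontier_image hi ▸ (h.finite_image_alpha hi).union (h.finite_image_beta hi)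

theorem disjoint_image (h : IsStairwell Sp α β k S) (hi : i ∈ Icc 1 k) :
    Disjoint (Prod.fst '' α i) (Prod.fst '' β i) := by
  rw [disjoint_iff_inter_eq_empty, ← (h.2.1 i hi).2.2.1.image_inter (h.alpha_subset hi)
    (h.beta_subset hi), (h.2.2.2.1 i hi).2.1, image_empty]

theorem isOrdinaryPoint_of_mem_alpha (h : IsStairwell Sp α β k S) (hi1 : 1 ≤ i)
    (hik : i ≤ k) {z : G} (hz : z ∈ Prod.fst '' α i) : IsOrdinaryPoint z := by
  obtain ⟨p, hp, rfl⟩ := hz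
  rcases hi1.eq_or_lt with rfl | hi1
  · exact absurd (h.alpha_one ▸ hp) (notMem_empty p)
  · exact h.2.2.2.2.2.2.2.2.2.1 i ⟨hi1, hik⟩ p hp

theorem isOrdinaryPoint_of_mem_frontier (h : IsStairwell Sp α β k S) (hi : i ∈ Icc 1 k)
    {z : G} (hz : z ∈ frontier (Prod.fst '' Sp i)) : IsOrdinaryPoint z := by
  rcases h.frontier_image hi ▸ hz with hz | ⟨p, hp, rfl⟩
  · exact h.isOrdinaryPoint_of_mem_alpha hi.1 hi.2 hz
  rcases hi.2.eq_or_lt with rfl | hik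
  · exact absurd (h.beta_last ▸ hp) (notMem_empty p)
  · exact h.isOrdinaryPoint_of_mem_alpha (by omega) hik ⟨p, h.beta_eq_alpha_succ hi.1 hik ▸ hp, rfl⟩

theorem sideOf_beta_eq_sideOf_alpha_succ [PreconnectedSpace G] [LocallyConnectedSpace G]
    [T1Space G] (h : IsStairwell Sp α β k S) (hi1 : 1 ≤ i) (hik : i < k) :
    sideOf (Prod.fst '' β i) (Prod.fst '' Sp i) =
      sideOf (Prod.fst '' α (i + 1)) (Prod.fst '' Sp (i + 1)) := by
  have hi : i ∈ Icc 1 k := ⟨hi1, hik.le⟩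
  have hi' : i + 1 ∈ Icc 1 k := ⟨by omega, hik⟩
  have hβα := h.beta_eq_alpha_succ hi1 hik
  obtain ⟨V, hV, hbV, hAV⟩ := h.2.2.2.2.2.2.2.1 i hi1 hik
  have hb' : Prod.fst '' β i ⊆ frontier (Prod.fst '' Sp (i + 1)) :=
    hβα ▸ h.frontier_image hi' ▸ subset_union_left
  rw [← hβα]
  exact (sideOf_subset_sideOf_of_inter_eq (h.isRegularSet_image hi).1
      (h.finite_frontier_image hi) (fun _ => h.isOrdinaryPoint_of_mem_frontier hi)
      (h.frontier_image hi ▸ subset_union_right) (h.consistentComplement_beta hi) hV hbV hAV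
      (h.nonempty_image hi')).antisymm
    (sideOf_subset_sideOf_of_inter_eq (h.isRegularSet_image hi').1
      (h.finite_frontier_image hi') (fun _ => h.isOrdinaryPoint_of_mem_frontier hi') hb'
      (hβα ▸ h.consistentComplement_alpha hi') hV hbV hAV.symm (h.nonempty_image hi))

theorem mem_sideOf_alpha_or_mem_sideOf_beta [PreconnectedSpace G] [LocallyConnectedSpace G]
    [T1Space G] (h : IsStairwell Sp α β k S) (hi : i ∈ Icc 1 k) (x : G) :
    x ∈ sideOf (Prod.fst '' α i) (Prod.fst '' Sp i) ∨
      x ∈ sideOf (Prod.fst '' β i) (Prod.fst '' Sp i) :=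
  mem_sideOf_or_mem_sideOf (h.isRegularSet_image hi).1 (h.nonempty_image hi)
    (h.isRegularSet_image hi).2.2 (h.finite_image_alpha hi) (image_mono (h.alpha_subset hi))
    (image_mono (h.beta_subset hi)) (h.disjoint_image hi) (h.consistentComplement_alpha hi) x

theorem mem_image_iff [PreconnectedSpace G] [LocallyConnectedSpace G] [T1Space G]
    (h : IsStairwell Sp α β k S) (hi : i ∈ Icc 1 k) {x : G} :
    x ∈ Prod.fst '' Sp i ↔ x ∈ sideOf (Prod.fst '' α i) (Prod.fst '' Sp i) ∧
      x ∈ sideOf (Prod.fst '' β i) (Prod.fst '' Sp i) := by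
  have hreg := h.isRegularSet_image hi
  refine ⟨fun hx => ⟨subset_sideOf (h.finite_image_alpha hi) hreg.2.2 hx,
    subset_sideOf (h.finite_image_beta hi) hreg.2.2 hx⟩, fun hx => ?_⟩
  exact sideOf_inter_sideOf_subset hreg.1 (h.nonempty_image hi) (h.frontier_image hi).subset
    (h.consistentComplement_alpha hi) (h.consistentComplement_beta hi) hx

theorem mem_sideOf_beta_iff [PreconnectedSpace G] (h : IsStairwell Sp α β k S)
    (hi : i ∈ Icc 1 k) {x : G} :
    (i = 0 ∨ i = k ∨ x ∈ sideOf (Prod.fst '' β i) (Prod.fst '' Sp i)) ↔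
      x ∈ sideOf (Prod.fst '' β i) (Prod.fst '' Sp i) := by
  refine ⟨?_, fun hx => Or.inr (Or.inr hx)⟩
  rintro (h0 | rfl | hx)
  · exact absurd h0 (Nat.one_le_iff_ne_zero.mp hi.1)
  · rw [h.beta_last, image_empty, sideOf_empty (h.nonempty_image hi)]
    exact mem_univ x
  · exact hx

theorem mem_sideOf_beta_pred_iff [PreconnectedSpace G] [LocallyConnectedSpace G] [T1Space G]
    (h : IsStairwell Sp α β k S) (hi : i ∈ Icc 1 k) {x : G} :
    (i - 1 = 0 ∨ i - 1 = k ∨ x ∈ sideOf (Prod.fst '' β (i - 1)) (Prod.fst '' Sp (i - 1))) ↔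
      x ∈ sideOf (Prod.fst '' α i) (Prod.fst '' Sp i) := by
  have hik := hi.2
  rcases hi.1.eq_or_lt with rfl | hi1
  · rw [h.alpha_one, image_empty, sideOf_empty (h.nonempty_image hi)]
    exact iff_of_true (Or.inl rfl) (mem_univ x)
  have heq := h.sideOf_beta_eq_sideOf_alpha_succ (i := i - 1) (by omega) (by omega)
  rw [Nat.sub_add_cancel hi.1] at heq
  rw [heq]
  exact ⟨fun hx => (hx.resolve_left (by omega)).resolve_left (by omega),
    fun hx => Or.inr (Or.inr hx)⟩

end IsStairwell

theorem stmt17_general (G : Type*) [TopologicalSpace G] [T2Space G]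
    [ConnectedSpace G] (hG : IsGraphSpace G)
    (S : Set (G × unitInterval)) (Sp α β : ℕ → Set (G × unitInterval)) (k : ℕ)
    (h : IsStairwell Sp α β k S) (x : G) :
    (∀ i < k, (i = 0 ∨ i = k ∨ x ∈ sideOf (Prod.fst '' β i) (Prod.fst '' Sp i)) ∨
      (i + 1 = 0 ∨ i + 1 = k ∨
        x ∈ sideOf (Prod.fst '' β (i + 1)) (Prod.fst '' Sp (i + 1)))) ∧
    (∀ i ∈ Set.Icc 1 k, (x ∈ Prod.fst '' Sp i ↔
      ((i - 1 = 0 ∨ i - 1 = k ∨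
        x ∈ sideOf (Prod.fst '' β (i - 1)) (Prod.fst '' Sp (i - 1))) ∧
       (i = 0 ∨ i = k ∨ x ∈ sideOf (Prod.fst '' β i) (Prod.fst '' Sp i))))) := by
  have := hG.locallyPathConnectedSpace
  refine ⟨fun i hik => ?_, fun i hi => ?_⟩
  · have hi : i + 1 ∈ Icc 1 k := ⟨by omega, hik⟩
    rcases h.mem_sideOf_alpha_or_mem_sideOf_beta hi x with hx | hx
    · exact Or.inl ((h.mem_sideOf_beta_pred_iff hi).mpr hx)
    · exact Or.inr ((h.mem_sideOf_beta_iff hi).mpr hx)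
  · exact (h.mem_image_iff hi).trans
      (and_congr (h.mem_sideOf_beta_pred_iff hi) (h.mem_sideOf_beta_iff hi)).symm

/-- the key parity claim in the proof that odd stairwells separate. -/
theorem stmt17 (G : Type*) [TopologicalSpace G] [CompactSpace G] [T2Space G]
    [ConnectedSpace G] (hG : IsGraphSpace G)
    (S : Set (G × unitInterval)) (Sp α β : ℕ → Set (G × unitInterval)) (k : ℕ)
    (h : IsStairwell Sp α β k S) (x : G) :
    (∀ i < k, (i = 0 ∨ i = k ∨ x ∈ sideOf (Prod.fst '' β i) (Prod.fst '' Sp i)) ∨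
      (i + 1 = 0 ∨ i + 1 = k ∨
        x ∈ sideOf (Prod.fst '' β (i + 1)) (Prod.fst '' Sp (i + 1)))) ∧
    (∀ i ∈ Set.Icc 1 k, (x ∈ Prod.fst '' Sp i ↔
      ((i - 1 = 0 ∨ i - 1 = k ∨
        x ∈ sideOf (Prod.fst '' β (i - 1)) (Prod.fst '' Sp (i - 1))) ∧
       (i = 0 ∨ i = k ∨ x ∈ sideOf (Prod.fst '' β i) (Prod.fst '' Sp i))))) :=
  stmt17_general G hG S Sp α β k h x
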